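/- arXiv:1902.01303 — 2 statements merged into one kernel-verified Lean document; each statement's English description precedes it below -/
import Mathlib

section
/- Let g, h ∈ GL(d,ℝ) and p ∈ {1,…,d−1}. Suppose that g, h and gh all have a gap of index p. Then d(U_p(gh), g·U_p(h)) ≤ ‖g‖·‖g⁻¹‖·σ_{p+1}(h)/σ_p(h). -/
noncomputable section

open scoped Matrix RealInnerProductSpace
open Filter Topology

namespace Paper

abbrev Euc (d : ℕ) : Type := EuclideanSpace ℝ (Fin d)

/-- The action of a `d × d` real matrix on Euclidean space. -/
def act {d : ℕ} (g : Matrix (Fin d) (Fin d) ℝ) (v : Euc d) : Euc d :=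
  Matrix.toEuclideanCLM (𝕜 := ℝ) g v

/-- The operator norm of a matrix acting on Euclidean space. -/
def opNorm {d : ℕ} (g : Matrix (Fin d) (Fin d) ℝ) : ℝ :=
  ‖(Matrix.toEuclideanCLM (𝕜 := ℝ) g : Euc d →L[ℝ] Euc d)‖

/-- The underlying matrix of an element of `GL (Fin d) ℝ`. -/
def mat {d : ℕ} (g : GL (Fin d) ℝ) : Matrix (Fin d) (Fin d) ℝ := ↑g

/-- The `p`-th singular value (`1`-indexed), via the min-max characterization:
`σ_p(g)` is the largest, over `p`-dimensional subspaces `P`, of the minimal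
stretch of unit vectors of `P`. -/
def sv {d : ℕ} (g : Matrix (Fin d) (Fin d) ℝ) (p : ℕ) : ℝ :=
  sSup { r | ∃ P : Submodule ℝ (Euc d), Module.finrank ℝ P = p ∧
      r = sInf { t | ∃ v ∈ P, ‖v‖ = 1 ∧ t = ‖act g v‖ } }

/-- `g` has a gap of index `p` if `σ_p(g) > σ_{p+1}(g)`. -/
def HasGap {d : ℕ} (g : Matrix (Fin d) (Fin d) ℝ) (p : ℕ) : Prop :=
  sv g (p + 1) < sv g p

/-- `U` is a Cartan attractor of index `p` for `g`: for some singular value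
decomposition `g = k·a·l` (`k`, `l` orthogonal, `a` diagonal with decreasing
nonnegative entries), `U` is the span of the first `p` columns of `k`. -/
def IsCartanAttractor {d : ℕ} (g : Matrix (Fin d) (Fin d) ℝ) (p : ℕ)
    (U : Submodule ℝ (Euc d)) : Prop :=
  ∃ k l : Matrix (Fin d) (Fin d) ℝ, ∃ σ : Fin d → ℝ,
    k ∈ Matrix.unitaryGroup (Fin d) ℝ ∧ l ∈ Matrix.unitaryGroup (Fin d) ℝ ∧
    (∀ i j : Fin d, i ≤ j → σ j ≤ σ i) ∧ (∀ i, 0 ≤ σ i) ∧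
    g = k * Matrix.diagonal σ * l ∧
    U = Submodule.span ℝ { x : Euc d | ∃ i : Fin d, (i : ℕ) < p ∧
          x = (EuclideanSpace.equiv (Fin d) ℝ).symm (fun j => k j i) }

/-- The Cartan attractor `U_p(g)`; when `g` has a gap of index `p` it is the
unique subspace satisfying `IsCartanAttractor g p`. -/
def cartanAttractor {d : ℕ} (g : Matrix (Fin d) (Fin d) ℝ) (p : ℕ) :
    Submodule ℝ (Euc d) :=
  letI := Classical.propDecidable (∃ U, IsCartanAttractor g p U)
  if h : ∃ U, IsCartanAttractor g p U then h.choose else ⊥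

/-- The angle `∠(P,Q)` between two subspaces: the infimum of angles between
nonzero vectors of `P` and `Q`. -/
def subAngle {d : ℕ} (P Q : Submodule ℝ (Euc d)) : ℝ :=
  sInf { θ | ∃ v ∈ P, v ≠ 0 ∧ ∃ w ∈ Q, w ≠ 0 ∧ θ = InnerProductGeometry.angle v w }

/-- `sin ∠(v,w)`. -/
def sinAngle {d : ℕ} (v w : Euc d) : ℝ := Real.sin (InnerProductGeometry.angle v w)

/-- The distance `d(P,Q) = max_{v ∈ P∖{0}} min_{w ∈ Q∖{0}} sin ∠(v,w)`. -/
def grassDist {d : ℕ} (P Q : Submodule ℝ (Euc d)) : ℝ :=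
  sSup { r | ∃ v ∈ P, v ≠ 0 ∧
      r = sInf { s | ∃ w ∈ Q, w ≠ 0 ∧ s = sinAngle v w } }

/-- The image `g·P` of a subspace under a matrix. -/
def mapMat {d : ℕ} (g : Matrix (Fin d) (Fin d) ℝ) (P : Submodule ℝ (Euc d)) :
    Submodule ℝ (Euc d) :=
  P.map ((Matrix.toEuclideanCLM (𝕜 := ℝ) g : Euc d →L[ℝ] Euc d) : Euc d →ₗ[ℝ] Euc d)

/-- `m(g|_W)`, the minimal stretch of unit vectors of `W` under `g`. -/
def minRestrict {d : ℕ} (g : Matrix (Fin d) (Fin d) ℝ) (W : Submodule ℝ (Euc d)) : ℝ :=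
  sInf { t | ∃ v ∈ W, ‖v‖ = 1 ∧ t = ‖act g v‖ }

/-- `‖g|_W‖`, the maximal stretch of unit vectors of `W` under `g`. -/
def normRestrict {d : ℕ} (g : Matrix (Fin d) (Fin d) ℝ) (W : Submodule ℝ (Euc d)) : ℝ :=
  sSup { t | ∃ v ∈ W, ‖v‖ = 1 ∧ t = ‖act g v‖ }


-- infrastructure
variable {d : ℕ}

lemma act_apply (A : Matrix (Fin d) (Fin d) ℝ) (v : Euc d) (j : Fin d) :
    act A v j = ∑ i, A j i * v i := rfl

lemma act_mul (A B : Matrix (Fin d) (Fin d) ℝ) (v : Euc d) :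
    act (A * B) v = act A (act B v) := by
  simp [act, map_mul]

lemma norm_act_le (A : Matrix (Fin d) (Fin d) ℝ) (v : Euc d) :
    ‖act A v‖ ≤ opNorm A * ‖v‖ :=
  (Matrix.toEuclideanCLM (𝕜 := ℝ) A).le_opNorm v

lemma opNorm_nonneg' (A : Matrix (Fin d) (Fin d) ℝ) : 0 ≤ opNorm A := norm_nonneg _

/-- the `i`-th column of `A` as a vector. -/
def col (A : Matrix (Fin d) (Fin d) ℝ) (i : Fin d) : Euc d :=
  (EuclideanSpace.equiv (Fin d) ℝ).symm (fun j => A j i)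

lemma col_apply (A : Matrix (Fin d) (Fin d) ℝ) (i j : Fin d) : col A i j = A j i := rfl

lemma inner_col (A : Matrix (Fin d) (Fin d) ℝ) (i i' : Fin d) :
    ⟪col A i, col A i'⟫ = (Aᵀ * A) i i' := by
  simp [PiLp.inner_apply, col_apply, Matrix.mul_apply, Matrix.transpose_apply]
  exact Finset.sum_congr rfl fun _ _ => mul_comm _ _

lemma orthonormal_col {A : Matrix (Fin d) (Fin d) ℝ}
    (hA : A ∈ Matrix.unitaryGroup (Fin d) ℝ) : Orthonormal ℝ (col A) := by
  rw [orthonormal_iff_ite]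
  intro i j
  rw [inner_col]
  have h1 : Aᵀ * A = 1 := by
    have := hA.1
    simpa [Matrix.star_eq_conjTranspose, Matrix.conjTranspose_eq_transpose_of_trivial] using this
  rw [h1]
  simp [Matrix.one_apply]

lemma star_mul_self_CLM {A : Matrix (Fin d) (Fin d) ℝ}
    (hA : A ∈ Matrix.unitaryGroup (Fin d) ℝ) :
    star (Matrix.toEuclideanCLM (𝕜 := ℝ) A) * Matrix.toEuclideanCLM (𝕜 := ℝ) A = 1 := by
  rw [← map_star, ← map_mul, hA.1, map_one]

lemma norm_act_unitary {A : Matrix (Fin d) (Fin d) ℝ}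
    (hA : A ∈ Matrix.unitaryGroup (Fin d) ℝ) (v : Euc d) : ‖act A v‖ = ‖v‖ := by
  have h1 := star_mul_self_CLM hA
  set U := Matrix.toEuclideanCLM (𝕜 := ℝ) A with hU
  have h2 : ⟪act A v, act A v⟫ = ⟪v, v⟫ := by
    calc ⟪act A v, act A v⟫ = ⟪U.adjoint (U v), v⟫ := by
          rw [ContinuousLinearMap.adjoint_inner_left]; rfl
      _ = ⟪(star U * U) v, v⟫ := by rw [ContinuousLinearMap.star_eq_adjoint]; rfl
      _ = ⟪v, v⟫ := by rw [h1]; rfl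
  rw [real_inner_self_eq_norm_sq, real_inner_self_eq_norm_sq] at h2
  have := congrArg Real.sqrt h2
  simpa [Real.sqrt_sq (norm_nonneg _)] using this

lemma star_unitary {A : Matrix (Fin d) (Fin d) ℝ}
    (hA : A ∈ Matrix.unitaryGroup (Fin d) ℝ) : Aᵀ ∈ Matrix.unitaryGroup (Fin d) ℝ := by
  have : star A ∈ Matrix.unitaryGroup (Fin d) ℝ := Unitary.star_mem hA
  simpa [Matrix.star_eq_conjTranspose, Matrix.conjTranspose_eq_transpose_of_trivial] using this

lemma act_eq_sum (A : Matrix (Fin d) (Fin d) ℝ) (y : Euc d) :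
    act A y = ∑ j, y j • col A j := by
  have key : ∀ s : Finset (Fin d), ∀ m : Fin d,
      (∑ j ∈ s, y j • col A j) m = ∑ j ∈ s, y j * A m j := by
    intro s
    induction s using Finset.induction with
    | empty => intro m; simp
    | insert _ _ hj ih =>
      intro m
      rw [Finset.sum_insert hj, Finset.sum_insert hj, PiLp.add_apply, PiLp.smul_apply, ih m]
      simp [col_apply]
  ext m
  rw [act_apply, key]
  exact Finset.sum_congr rfl fun j _ => mul_comm _ _

lemma act_transpose_act {A : Matrix (Fin d) (Fin d) ℝ}
    (hA : A ∈ Matrix.unitaryGroup (Fin d) ℝ) (v : Euc d) : act Aᵀ (act A v) = v := by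
  have h1 : Aᵀ * A = 1 := by
    have := hA.1
    simpa [Matrix.star_eq_conjTranspose, Matrix.conjTranspose_eq_transpose_of_trivial] using this
  rw [← act_mul, h1]
  simp [act]

lemma act_act_transpose {A : Matrix (Fin d) (Fin d) ℝ}
    (hA : A ∈ Matrix.unitaryGroup (Fin d) ℝ) (v : Euc d) : act A (act Aᵀ v) = v := by
  have h1 : A * Aᵀ = 1 := by
    have := hA.2
    simpa [Matrix.star_eq_conjTranspose, Matrix.conjTranspose_eq_transpose_of_trivial] using this
  rw [← act_mul, h1]
  simp [act]

lemma act_add (A : Matrix (Fin d) (Fin d) ℝ) (u v : Euc d) :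
    act A (u + v) = act A u + act A v := by simp [act, map_add]

lemma act_smul (A : Matrix (Fin d) (Fin d) ℝ) (c : ℝ) (v : Euc d) :
    act A (c • v) = c • act A v := by simp [act, map_smul]

lemma act_zero (A : Matrix (Fin d) (Fin d) ℝ) : act A (0 : Euc d) = 0 := by
  simp [act, map_zero]

lemma col_eq_act_single (A : Matrix (Fin d) (Fin d) ℝ) (i : Fin d) :
    col A i = act A (EuclideanSpace.single i 1) := by
  ext j
  simp [col_apply, act_apply, EuclideanSpace.single_apply]

lemma act_mem_span (A : Matrix (Fin d) (Fin d) ℝ) (S : Set (Fin d)) (y : Euc d)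
    (hy : ∀ j, j ∉ S → y j = 0) :
    act A y ∈ Submodule.span ℝ (col A '' S) := by
  rw [act_eq_sum]
  refine Submodule.sum_mem _ fun j _ => ?_
  by_cases hj : j ∈ S
  · exact Submodule.smul_mem _ _ (Submodule.subset_span ⟨j, hj, rfl⟩)
  · rw [hy j hj, zero_smul]; exact Submodule.zero_mem _

lemma mem_span_iff {l : Matrix (Fin d) (Fin d) ℝ}
    (hl : l ∈ Matrix.unitaryGroup (Fin d) ℝ) (S : Set (Fin d)) (u : Euc d) :
    u ∈ Submodule.span ℝ (col lᵀ '' S) ↔ ∀ j, j ∉ S → act l u j = 0 := by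
  constructor
  · intro hu
    refine Submodule.span_induction ?_ ?_ ?_ ?_ hu
    · rintro x ⟨i, hiS, rfl⟩ j hj
      rw [col_eq_act_single, ← act_mul]
      have h1 : l * lᵀ = 1 := by
        have := hl.2
        simpa [Matrix.star_eq_conjTranspose,
          Matrix.conjTranspose_eq_transpose_of_trivial] using this
      rw [h1]
      have : act (1 : Matrix (Fin d) (Fin d) ℝ) (EuclideanSpace.single i 1)
          = EuclideanSpace.single i 1 := by simp [act]
      rw [this]
      have hne : j ≠ i := fun hji => hj (hji ▸ hiS)
      simp [EuclideanSpace.single_apply, hne]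
    · intro j _
      rw [act_zero]; rfl
    · intro x y _ _ hx hy j hj
      rw [act_add, PiLp.add_apply, hx j hj, hy j hj, add_zero]
    · intro c x _ hx j hj
      rw [act_smul, PiLp.smul_apply, hx j hj, smul_zero]
  · intro hsupp
    have : u = act lᵀ (act l u) := (act_transpose_act hl u).symm
    rw [this]
    exact act_mem_span _ _ _ hsupp

lemma norm_sq_eq (y : Euc d) : ‖y‖ ^ 2 = ∑ j, y j ^ 2 := by
  rw [← real_inner_self_eq_norm_sq]
  simp only [PiLp.inner_apply, RCLike.inner_apply, conj_trivial, sq]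

lemma norm_le_of_abs_le {a b : Euc d} (h : ∀ j, |a j| ≤ |b j|) : ‖a‖ ≤ ‖b‖ := by
  have h2 : ‖a‖ ^ 2 ≤ ‖b‖ ^ 2 := by
    rw [norm_sq_eq, norm_sq_eq]
    refine Finset.sum_le_sum fun j _ => ?_
    calc a j ^ 2 = |a j| ^ 2 := (sq_abs _).symm
      _ ≤ |b j| ^ 2 := pow_le_pow_left₀ (abs_nonneg _) (h j) 2
      _ = b j ^ 2 := sq_abs _
  nlinarith [norm_nonneg a, norm_nonneg b]

lemma act_diagonal (σ : Fin d → ℝ) (y : Euc d) (j : Fin d) :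
    act (Matrix.diagonal σ) y j = σ j * y j := by
  rw [act_apply]
  simp [Matrix.diagonal_apply, Finset.sum_ite_eq]

lemma diag_lower (σ : Fin d → ℝ) (y : Euc d) (c : Fin d) (hc : 0 ≤ σ c)
    (h : ∀ j, y j ≠ 0 → σ c ≤ σ j) :
    σ c * ‖y‖ ≤ ‖act (Matrix.diagonal σ) y‖ := by
  have h2 : (σ c * ‖y‖) ^ 2 ≤ ‖act (Matrix.diagonal σ) y‖ ^ 2 := by
    rw [mul_pow, norm_sq_eq, norm_sq_eq, Finset.mul_sum]
    refine Finset.sum_le_sum fun j _ => ?_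
    rw [act_diagonal, mul_pow]
    by_cases hy : y j = 0
    · simp [hy]
    · exact mul_le_mul_of_nonneg_right (pow_le_pow_left₀ hc (h j hy) 2) (sq_nonneg _)
  nlinarith [norm_nonneg (act (Matrix.diagonal σ) y), mul_nonneg hc (norm_nonneg y)]

lemma diag_upper (σ : Fin d → ℝ) (y : Euc d) (c : Fin d) (h0 : ∀ j, 0 ≤ σ j)
    (h : ∀ j, y j ≠ 0 → σ j ≤ σ c) :
    ‖act (Matrix.diagonal σ) y‖ ≤ σ c * ‖y‖ := by
  have h2 : ‖act (Matrix.diagonal σ) y‖ ^ 2 ≤ (σ c * ‖y‖) ^ 2 := by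
    rw [mul_pow, norm_sq_eq, norm_sq_eq, Finset.mul_sum]
    refine Finset.sum_le_sum fun j _ => ?_
    rw [act_diagonal, mul_pow]
    by_cases hy : y j = 0
    · simp [hy]
    · exact mul_le_mul_of_nonneg_right (pow_le_pow_left₀ (h0 j) (h j hy) 2) (sq_nonneg _)
  nlinarith [norm_nonneg (act (Matrix.diagonal σ) y), norm_nonneg y,
    mul_nonneg (h0 c) (norm_nonneg y)]

lemma finrank_span_col_range {A : Matrix (Fin d) (Fin d) ℝ}
    (hA : A ∈ Matrix.unitaryGroup (Fin d) ℝ) {m : ℕ} (f : Fin m → Fin d)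
    (hf : Function.Injective f) :
    Module.finrank ℝ (Submodule.span ℝ (Set.range (col A ∘ f))) = m := by
  have h1 : Orthonormal ℝ (col A ∘ f) := (orthonormal_col hA).comp f hf
  rw [finrank_span_eq_card h1.linearIndependent, Fintype.card_fin]

lemma image_range (A : Matrix (Fin d) (Fin d) ℝ) {m : ℕ} (f : Fin m → Fin d) :
    col A '' Set.range f = Set.range (col A ∘ f) := (Set.range_comp _ _).symm

lemma exists_unit_vector {P : Submodule ℝ (Euc d)}
    (hq : 1 ≤ Module.finrank ℝ P) : ∃ v ∈ P, ‖v‖ = 1 := by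
  have hbot : P ≠ ⊥ := by
    intro hb
    rw [hb, finrank_bot] at hq
    omega
  obtain ⟨v, hv, hv0⟩ := Submodule.exists_mem_ne_zero_of_ne_bot hbot
  refine ⟨‖v‖⁻¹ • v, Submodule.smul_mem _ _ hv, ?_⟩
  rw [norm_smul, norm_inv, norm_norm, inv_mul_cancel₀ (norm_ne_zero_iff.mpr hv0)]

lemma sinAngle_nonneg (v w : Euc d) : 0 ≤ sinAngle v w :=
  Real.sin_nonneg_of_nonneg_of_le_pi (InnerProductGeometry.angle_nonneg v w)
    (InnerProductGeometry.angle_le_pi v w)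

lemma sinAngle_le_one (v w : Euc d) : sinAngle v w ≤ 1 := Real.sin_le_one _

lemma sinAngle_le_div (v w : Euc d) (hv : v ≠ 0) : sinAngle v w ≤ ‖v - w‖ / ‖v‖ := by
  have hvpos : (0:ℝ) < ‖v‖ := norm_pos_iff.mpr hv
  by_cases hw : w = 0
  · subst hw
    rw [sinAngle, InnerProductGeometry.angle_zero_right, Real.sin_pi_div_two, sub_zero,
      div_self (ne_of_gt hvpos)]
  · have hwpos : (0:ℝ) < ‖w‖ := norm_pos_iff.mpr hw
    have key := InnerProductGeometry.sin_angle_mul_norm_mul_norm v w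
    have hsq : ⟪v, v⟫ * ⟪w, w⟫ - ⟪v, w⟫ * ⟪v, w⟫ ≤ (‖v - w‖ * ‖w‖) ^ 2 := by
      have hexp : ‖v - w‖ ^ 2 = ‖v‖ ^ 2 - 2 * ⟪v, w⟫ + ‖w‖ ^ 2 := by
        rw [norm_sub_sq_real]
      have h1 : ⟪v, v⟫ = ‖v‖ ^ 2 := real_inner_self_eq_norm_sq v
      have h2 : ⟪w, w⟫ = ‖w‖ ^ 2 := real_inner_self_eq_norm_sq w
      have h3 : (‖v - w‖ * ‖w‖) ^ 2 = ‖v - w‖ ^ 2 * ‖w‖ ^ 2 := by ring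
      rw [h1, h2, h3, hexp]
      nlinarith [sq_nonneg (⟪v, w⟫ - ‖w‖ ^ 2)]
    have hsqrt : Real.sqrt (⟪v, v⟫ * ⟪w, w⟫ - ⟪v, w⟫ * ⟪v, w⟫) ≤ ‖v - w‖ * ‖w‖ := by
      calc Real.sqrt (⟪v, v⟫ * ⟪w, w⟫ - ⟪v, w⟫ * ⟪v, w⟫)
          ≤ Real.sqrt ((‖v - w‖ * ‖w‖) ^ 2) := Real.sqrt_le_sqrt hsq
        _ = ‖v - w‖ * ‖w‖ := Real.sqrt_sq (by positivity)
    have hmul : sinAngle v w * (‖v‖ * ‖w‖) ≤ ‖v - w‖ * ‖w‖ := by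
      rw [sinAngle, key]; exact hsqrt
    rw [le_div_iff₀ hvpos]
    have := (mul_le_mul_iff_of_pos_right hwpos).mp (by linarith [hmul] : sinAngle v w * ‖v‖ * ‖w‖ ≤ ‖v - w‖ * ‖w‖)
    linarith

lemma svSet_bddAbove (g : Matrix (Fin d) (Fin d) ℝ) (q : ℕ) (hq : 1 ≤ q) :
    BddAbove { r | ∃ P : Submodule ℝ (Euc d), Module.finrank ℝ P = q ∧
      r = sInf { t | ∃ v ∈ P, ‖v‖ = 1 ∧ t = ‖act g v‖ } } := by
  refine ⟨opNorm g, ?_⟩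
  rintro r ⟨P, hP, rfl⟩
  obtain ⟨v, hvP, hv1⟩ := exists_unit_vector (by rw [hP]; exact hq)
  have hmem : ‖act g v‖ ∈ { t | ∃ v ∈ P, ‖v‖ = 1 ∧ t = ‖act g v‖ } := ⟨v, hvP, hv1, rfl⟩
  have hbdd : BddBelow { t | ∃ v ∈ P, ‖v‖ = 1 ∧ t = ‖act g v‖ } := by
    refine ⟨0, ?_⟩
    rintro t ⟨w, _, _, rfl⟩
    exact norm_nonneg _
  calc sInf { t | ∃ v ∈ P, ‖v‖ = 1 ∧ t = ‖act g v‖ } ≤ ‖act g v‖ := csInf_le hbdd hmem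
    _ ≤ opNorm g * ‖v‖ := norm_act_le g v
    _ = opNorm g := by rw [hv1, mul_one]

lemma one_mem_unitary : (1 : Matrix (Fin d) (Fin d) ℝ) ∈ Matrix.unitaryGroup (Fin d) ℝ := by
  constructor <;> simp

lemma sv_nonneg (g : Matrix (Fin d) (Fin d) ℝ) (q : ℕ) (hq : 1 ≤ q) (hqd : q ≤ d) :
    0 ≤ sv g q := by
  have hfin : Module.finrank ℝ
      (Submodule.span ℝ (Set.range (col (1 : Matrix (Fin d) (Fin d) ℝ) ∘ Fin.castLE hqd))) = q :=
    finrank_span_col_range one_mem_unitary _ (Fin.castLE_injective hqd)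
  set P := Submodule.span ℝ (Set.range (col (1 : Matrix (Fin d) (Fin d) ℝ) ∘ Fin.castLE hqd))
  set S := { t | ∃ v ∈ P, ‖v‖ = 1 ∧ t = ‖act g v‖ }
  have h0 : 0 ≤ sInf S := Real.sInf_nonneg (by rintro t ⟨w, _, _, rfl⟩; exact norm_nonneg _)
  have hmem : sInf S ∈ { r | ∃ P : Submodule ℝ (Euc d), Module.finrank ℝ P = q ∧
      r = sInf { t | ∃ v ∈ P, ‖v‖ = 1 ∧ t = ‖act g v‖ } } := ⟨P, hfin, rfl⟩
  exact le_trans h0 (le_csSup (svSet_bddAbove g q hq) hmem)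

section SVD

variable {k l : Matrix (Fin d) (Fin d) ℝ} {σ : Fin d → ℝ}

lemma range_castLE {q : ℕ} (hqd : q ≤ d) (j : Fin d) :
    j ∈ Set.range (Fin.castLE hqd) ↔ (j : ℕ) < q := by
  constructor
  · rintro ⟨i, rfl⟩; simpa using i.2
  · intro hj; exact ⟨⟨(j : ℕ), hj⟩, by ext; simp⟩

lemma norm_act_svd (hk : k ∈ Matrix.unitaryGroup (Fin d) ℝ) (v : Euc d) :
    ‖act (k * Matrix.diagonal σ * l) v‖ = ‖act (Matrix.diagonal σ) (act l v)‖ := by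
  rw [act_mul, act_mul, norm_act_unitary hk]

lemma sv_ge_sigma (hk : k ∈ Matrix.unitaryGroup (Fin d) ℝ)
    (hl : l ∈ Matrix.unitaryGroup (Fin d) ℝ)
    (hmono : ∀ i j : Fin d, i ≤ j → σ j ≤ σ i) (hpos : ∀ i, 0 ≤ σ i)
    (q : ℕ) (hq1 : 1 ≤ q) (hqd : q ≤ d) :
    σ ⟨q - 1, by omega⟩ ≤ sv (k * Matrix.diagonal σ * l) q := by
  set B := k * Matrix.diagonal σ * l with hB
  set c : Fin d := ⟨q - 1, by omega⟩ with hc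
  set P := Submodule.span ℝ (Set.range (col lᵀ ∘ Fin.castLE hqd)) with hP
  have hfin : Module.finrank ℝ P = q :=
    finrank_span_col_range (star_unitary hl) _ (Fin.castLE_injective hqd)
  have hPspan : P = Submodule.span ℝ (col lᵀ '' Set.range (Fin.castLE hqd)) := by
    rw [image_range]
  have hstep : ∀ v ∈ P, ‖v‖ = 1 → σ c ≤ ‖act B v‖ := by
    intro v hv hv1
    have hsupp : ∀ j, (j : ℕ) < q → False → True := fun _ _ _ => trivial
    have hmem := (mem_span_iff hl (Set.range (Fin.castLE hqd)) v).mp (hPspan ▸ hv)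
    have hy : ∀ j : Fin d, ¬ ((j : ℕ) < q) → act l v j = 0 := by
      intro j hj
      exact hmem j (fun hr => hj ((range_castLE hqd j).mp hr))
    have hlow := diag_lower σ (act l v) c (hpos c) (by
      intro j hyj
      have hjq : (j : ℕ) < q := by by_contra hcon; exact hyj (hy j hcon)
      have hcj : c ≤ j → σ j ≤ σ c := hmono c j
      have hjc : j ≤ c := by rw [Fin.le_def]; simp [hc]; omega
      exact hmono j c hjc)
    have hnB : ‖act B v‖ = ‖act (Matrix.diagonal σ) (act l v)‖ := norm_act_svd hk v
    rw [hnB]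
    calc σ c = σ c * ‖act l v‖ := by rw [norm_act_unitary hl, hv1, mul_one]
      _ ≤ _ := hlow
  obtain ⟨v₀, hv₀P, hv₀1⟩ := exists_unit_vector (by rw [hfin]; exact hq1)
  have hne : { t | ∃ v ∈ P, ‖v‖ = 1 ∧ t = ‖act B v‖ }.Nonempty := ⟨_, v₀, hv₀P, hv₀1, rfl⟩
  have hinf : σ c ≤ sInf { t | ∃ v ∈ P, ‖v‖ = 1 ∧ t = ‖act B v‖ } :=
    le_csInf hne (by rintro t ⟨v, hv, hv1, rfl⟩; exact hstep v hv hv1)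
  exact le_trans hinf (le_csSup (svSet_bddAbove B q hq1) ⟨P, hfin, rfl⟩)

lemma sv_le_sigma (hk : k ∈ Matrix.unitaryGroup (Fin d) ℝ)
    (hl : l ∈ Matrix.unitaryGroup (Fin d) ℝ)
    (hmono : ∀ i j : Fin d, i ≤ j → σ j ≤ σ i) (hpos : ∀ i, 0 ≤ σ i)
    (A C : Matrix (Fin d) (Fin d) ℝ) (hACB : A = C * (k * Matrix.diagonal σ * l))
    (q : ℕ) (hq1 : 1 ≤ q) (hqd : q ≤ d) :
    sv A q ≤ opNorm C * σ ⟨q - 1, by omega⟩ := by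
  set B := k * Matrix.diagonal σ * l with hB
  set c : Fin d := ⟨q - 1, by omega⟩ with hc
  have hm : q - 1 + (d - (q - 1)) = d := by omega
  set fW : Fin (d - (q - 1)) → Fin d := fun j => ⟨q - 1 + (j : ℕ), by omega⟩ with hfW
  have hfWinj : Function.Injective fW := by
    intro a b hab
    have := congrArg (fun x : Fin d => (x : ℕ)) hab
    simp [hfW] at this
    exact Fin.ext this
  set W := Submodule.span ℝ (Set.range (col lᵀ ∘ fW)) with hW
  have hWfin : Module.finrank ℝ W = d - (q - 1) :=
    finrank_span_col_range (star_unitary hl) _ hfWinj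
  have hrangeW : ∀ j : Fin d, j ∈ Set.range fW ↔ q - 1 ≤ (j : ℕ) := by
    intro j
    constructor
    · rintro ⟨i, rfl⟩; simp [hfW]
    · intro hj; exact ⟨⟨(j : ℕ) - (q - 1), by omega⟩, by ext; simp [hfW]; omega⟩
  rw [sv]
  refine Real.sSup_le ?_ (mul_nonneg (opNorm_nonneg' C) (hpos c))
  rintro r ⟨P, hPfin, rfl⟩
  -- find a unit vector in P ⊓ W
  have hPWfin : 1 ≤ Module.finrank ℝ ↥(P ⊓ W) := by
    have hsum := Submodule.finrank_sup_add_finrank_inf_eq P W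
    have hle : Module.finrank ℝ ↥(P ⊔ W) ≤ d := by
      have := Submodule.finrank_le (P ⊔ W)
      simpa [finrank_euclideanSpace] using this
    omega
  obtain ⟨x, hx, hx1⟩ := exists_unit_vector hPWfin
  have hxP : x ∈ P := hx.1
  have hxW : x ∈ W := hx.2
  have hbdd : BddBelow { t | ∃ v ∈ P, ‖v‖ = 1 ∧ t = ‖act A v‖ } := by
    refine ⟨0, ?_⟩; rintro t ⟨w, _, _, rfl⟩; exact norm_nonneg _
  have h1 : sInf { t | ∃ v ∈ P, ‖v‖ = 1 ∧ t = ‖act A v‖ } ≤ ‖act A x‖ :=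
    csInf_le hbdd ⟨x, hxP, hx1, rfl⟩
  -- bound ‖act A x‖
  have hsupp : ∀ j : Fin d, ¬ (q - 1 ≤ (j : ℕ)) → act l x j = 0 := by
    have hmem := (mem_span_iff hl (Set.range fW) x).mp (by rw [image_range]; exact hxW)
    intro j hj
    exact hmem j (fun hr => hj ((hrangeW j).mp hr))
  have hup := diag_upper σ (act l x) c hpos (by
    intro j hyj
    have hjq : q - 1 ≤ (j : ℕ) := by by_contra hcon; exact hyj (hsupp j hcon)
    exact hmono c j (by rw [Fin.le_def]; simp [hc]; omega))
  have hBx : ‖act B x‖ ≤ σ c := by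
    rw [norm_act_svd hk]
    calc ‖act (Matrix.diagonal σ) (act l x)‖ ≤ σ c * ‖act l x‖ := hup
      _ = σ c := by rw [norm_act_unitary hl, hx1, mul_one]
  have hAx : ‖act A x‖ ≤ opNorm C * σ c := by
    rw [hACB, act_mul]
    calc ‖act C (act B x)‖ ≤ opNorm C * ‖act B x‖ := norm_act_le C _
      _ ≤ opNorm C * σ c := by
          exact mul_le_mul_of_nonneg_left hBx (opNorm_nonneg' C)
  exact le_trans h1 hAx

end SVD

lemma act_one (x : Euc d) : act (1 : Matrix (Fin d) (Fin d) ℝ) x = x := by simp [act]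

lemma act_GL_inv_act {a : GL (Fin d) ℝ} (x : Euc d) :
    act (mat a⁻¹) (act (mat a) x) = x := by
  rw [← act_mul]
  have h1 : mat a⁻¹ * mat a = 1 := by
    rw [mat, mat, ← Units.val_mul, inv_mul_cancel, Units.val_one]
  rw [h1, act_one]

lemma act_GL_act_inv {a : GL (Fin d) ℝ} (x : Euc d) :
    act (mat a) (act (mat a⁻¹) x) = x := by
  rw [← act_mul]
  have h1 : mat a * mat a⁻¹ = 1 := by
    rw [mat, mat, ← Units.val_mul, mul_inv_cancel, Units.val_one]
  rw [h1, act_one]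

lemma act_GL_ne_zero {a : GL (Fin d) ℝ} {x : Euc d} (hx : x ≠ 0) :
    act (mat a) x ≠ 0 := by
  intro hc
  apply hx
  have := act_GL_inv_act (a := a) x
  rw [hc, act_zero] at this
  exact this.symm

lemma act_svd_col {k l : Matrix (Fin d) (Fin d) ℝ} {σ : Fin d → ℝ}
    (hl : l ∈ Matrix.unitaryGroup (Fin d) ℝ) (i : Fin d) :
    act (k * Matrix.diagonal σ * l) (col lᵀ i) = σ i • col k i := by
  rw [act_mul, act_mul, col_eq_act_single lᵀ, act_act_transpose hl]
  have hdiag : act (Matrix.diagonal σ) (EuclideanSpace.single i 1)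
      = σ i • EuclideanSpace.single i 1 := by
    ext j
    rw [act_diagonal, PiLp.smul_apply]
    by_cases hji : j = i <;> simp [hji, EuclideanSpace.single_apply]
  rw [hdiag, act_smul, ← col_eq_act_single]

lemma setOf_eq_image (M : Matrix (Fin d) (Fin d) ℝ) (p : ℕ) :
    { x : Euc d | ∃ i : Fin d, (i : ℕ) < p ∧
        x = (EuclideanSpace.equiv (Fin d) ℝ).symm (fun j => M j i) }
      = col M '' { i : Fin d | (i : ℕ) < p } := by
  ext x
  constructor
  · rintro ⟨i, hi, rfl⟩; exact ⟨i, hi, rfl⟩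
  · rintro ⟨i, hi, rfl⟩; exact ⟨i, hi, rfl⟩

lemma setOf_lt_eq_range {p : ℕ} (hpd : p ≤ d) :
    { i : Fin d | (i : ℕ) < p } = Set.range (Fin.castLE hpd) := by
  ext j
  rw [Set.mem_setOf_eq, range_castLE hpd]

lemma key {p : ℕ} (hp1 : 1 ≤ p) (hpd : p + 1 ≤ d)
    (g h : GL (Fin d) ℝ) (hh : HasGap (mat h) p)
    (U₁ U₂ : Submodule ℝ (Euc d))
    (h1 : IsCartanAttractor (mat (g * h)) p U₁)
    (h2 : IsCartanAttractor (mat h) p U₂) :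
    grassDist U₁ (mapMat (mat g) U₂) ≤
      opNorm (mat g) * opNorm (mat (g⁻¹)) * (sv (mat h) (p + 1) / sv (mat h) p) := by
  obtain ⟨k, l, σ, hk, hl, hmono, hpos, hBeq, hU₁⟩ := h1
  obtain ⟨k', l', σ', hk', hl', hmono', hpos', hheq, hU₂⟩ := h2
  set A := opNorm (mat g) with hA
  set N := opNorm (mat (g⁻¹)) with hN
  set q := sv (mat h) p with hq
  set r := sv (mat h) (p + 1) with hr
  set c1 : Fin d := ⟨p - 1, by omega⟩ with hc1
  set cp : Fin d := ⟨p, by omega⟩ with hcp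
  -- positivity of the singular values of g*h
  have hσpos : ∀ i, 0 < σ i := by
    intro i
    rcases lt_or_eq_of_le (hpos i) with h' | h'
    · exact h'
    · exfalso
      have hcol : act (mat (g * h)) (col lᵀ i) = σ i • col k i := by
        rw [hBeq]; exact act_svd_col hl i
      rw [← h', zero_smul] at hcol
      have h0 : col lᵀ i = 0 := by
        have := act_GL_inv_act (a := g * h) (col lᵀ i)
        rw [hcol, act_zero] at this
        exact this.symm
      have hn1 : ‖col lᵀ i‖ = 1 := (orthonormal_col (star_unitary hl)).1 i
      rw [h0, norm_zero] at hn1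
      exact zero_ne_one hn1
  have hr0 : 0 ≤ r := sv_nonneg _ _ (by omega) (by omega)
  have hq_pos : 0 < q := lt_of_le_of_lt hr0 hh
  have hF1 : σ' cp ≤ r := by
    rw [hr, hheq]
    have := sv_ge_sigma hk' hl' hmono' hpos' (p + 1) (by omega) (by omega)
    convert this using 2
    simp [hcp]
  have hmath : mat h = mat (g⁻¹) * (k * Matrix.diagonal σ * l) := by
    rw [← hBeq, mat, mat, mat, ← Units.val_mul]
    congr 1
    group
  have hF2 : q ≤ N * σ c1 := by
    have := sv_le_sigma hk hl hmono hpos (mat h) (mat (g⁻¹)) hmath p (by omega) (by omega)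
    exact this
  have hσc1 : 0 < σ c1 := hσpos c1
  have hN_pos : 0 < N := by nlinarith
  have hA0 : 0 ≤ A := opNorm_nonneg' _
  have hRHS0 : 0 ≤ A * N * (r / q) := by positivity
  have hM : A * σ' cp / σ c1 ≤ A * N * (r / q) := by
    rw [div_le_iff₀ hσc1]
    have h1 : A * σ' cp * q ≤ A * N * r * σ c1 := by
      nlinarith [mul_nonneg hA0 (hpos' cp), mul_nonneg hA0 hr0,
        mul_le_mul_of_nonneg_left hF1 hA0, mul_le_mul_of_nonneg_left hF2 (mul_nonneg hA0 hr0)]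
    calc A * σ' cp = A * σ' cp * q / q := by field_simp
      _ ≤ A * N * r * σ c1 / q := by gcongr
      _ = A * N * (r / q) * σ c1 := by field_simp
  -- span descriptions
  have hU₁span : U₁ = Submodule.span ℝ (col k '' {i : Fin d | (i : ℕ) < p}) := by
    rw [hU₁, setOf_eq_image]
  have hU₂span : U₂ = Submodule.span ℝ (col k' '' {i : Fin d | (i : ℕ) < p}) := by
    rw [hU₂, setOf_eq_image]
  have hU₂fin : Module.finrank ℝ U₂ = p := by
    rw [hU₂span, setOf_lt_eq_range (show p ≤ d by omega), image_range]
    exact finrank_span_col_range hk' _ (Fin.castLE_injective _)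
  have hBgh : mat (g * h) = mat g * mat h := by rw [mat, mat, mat, Units.val_mul]
  rw [grassDist]
  refine Real.sSup_le ?_ hRHS0
  rintro ρ ⟨v, hvU₁, hv0, rfl⟩
  set u := act (mat ((g * h)⁻¹)) v with hu
  have hBu : act (mat (g * h)) u = v := act_GL_act_inv v
  have hu0 : u ≠ 0 := by intro hc; apply hv0; rw [← hBu, hc, act_zero]
  have hunorm : 0 < ‖u‖ := norm_pos_iff.mpr hu0
  have hvpos : 0 < ‖v‖ := norm_pos_iff.mpr hv0
  -- u lies in the span of the top right singular vectors of g*h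
  set Linv : Euc d →ₗ[ℝ] Euc d :=
    ((Matrix.toEuclideanCLM (𝕜 := ℝ) (mat ((g * h)⁻¹)) : Euc d →L[ℝ] Euc d) :
      Euc d →ₗ[ℝ] Euc d) with hLinv
  have huV : u ∈ Submodule.span ℝ (col lᵀ '' {i : Fin d | (i : ℕ) < p}) := by
    have hv' : v ∈ Submodule.span ℝ (col k '' {i : Fin d | (i : ℕ) < p}) := hU₁span ▸ hvU₁
    have hLmem := Submodule.apply_mem_span_image_of_mem_span Linv hv'
    have hsub : Linv '' (col k '' {i : Fin d | (i : ℕ) < p}) ⊆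
        ↑(Submodule.span ℝ (col lᵀ '' {i : Fin d | (i : ℕ) < p})) := by
      rintro x ⟨x', ⟨i, hi, rfl⟩, rfl⟩
      have h1 : act (mat (g * h)) (col lᵀ i) = σ i • col k i := by
        rw [hBeq]; exact act_svd_col hl i
      have h2 : col lᵀ i = σ i • act (mat ((g * h)⁻¹)) (col k i) := by
        conv_lhs => rw [← act_GL_inv_act (a := g * h) (col lᵀ i)]
        rw [h1, act_smul]
      have h3 : Linv (col k i) = (σ i)⁻¹ • col lᵀ i := by
        have h4 := congrArg (fun x => (σ i)⁻¹ • x) h2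
        simp only [smul_smul, inv_mul_cancel₀ (ne_of_gt (hσpos i)), one_smul] at h4
        exact h4.symm
      rw [h3]
      exact Submodule.smul_mem _ _ (Submodule.subset_span ⟨i, hi, rfl⟩)
    exact Submodule.span_le.mpr hsub hLmem
  have hsuppu : ∀ j : Fin d, ¬ ((j : ℕ) < p) → act l u j = 0 := by
    have := (mem_span_iff hl {i : Fin d | (i : ℕ) < p} u).mp huV
    exact fun j hj => this j hj
  have hlowv : σ c1 * ‖u‖ ≤ ‖v‖ := by
    have hcond : ∀ j : Fin d, act l u j ≠ 0 → σ c1 ≤ σ j := by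
      intro j hyj
      have hjp : (j : ℕ) < p := by by_contra hcon; exact hyj (hsuppu j hcon)
      exact hmono j c1 (by rw [Fin.le_def, hc1]; simp; omega)
    have hdl := diag_lower σ (act l u) c1 (hpos c1) hcond
    rw [← hBu, hBeq, norm_act_svd hk]
    calc σ c1 * ‖u‖ = σ c1 * ‖act l u‖ := by rw [norm_act_unitary hl]
      _ ≤ _ := hdl
  -- decompose u
  set y := act l' u with hy
  set z1 : Euc d := (EuclideanSpace.equiv (Fin d) ℝ).symm
    (fun j => if (j : ℕ) < p then y j else 0) with hz1
  set z2 : Euc d := (EuclideanSpace.equiv (Fin d) ℝ).symm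
    (fun j => if (j : ℕ) < p then 0 else y j) with hz2
  have hz1app : ∀ j, z1 j = if (j : ℕ) < p then y j else 0 := fun j => rfl
  have hz2app : ∀ j, z2 j = if (j : ℕ) < p then 0 else y j := fun j => rfl
  have hz12 : z1 + z2 = y := by
    ext j
    rw [PiLp.add_apply, hz1app, hz2app]
    by_cases hj : (j : ℕ) < p <;> simp [hj]
  set u1 := act l'ᵀ z1 with hu1def
  set u2 := act l'ᵀ z2 with hu2def
  have hu12 : u1 + u2 = u := by
    calc u1 + u2 = act l'ᵀ y := by rw [hu1def, hu2def, ← act_add, hz12]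
      _ = u := by rw [hy, act_transpose_act hl']
  have hhu1 : act (mat h) u1 = act k' (act (Matrix.diagonal σ') z1) := by
    rw [hheq, act_mul, act_mul, hu1def, act_act_transpose hl']
  have hhu2 : act (mat h) u2 = act k' (act (Matrix.diagonal σ') z2) := by
    rw [hheq, act_mul, act_mul, hu2def, act_act_transpose hl']
  have hw'mem : act (mat h) u1 ∈ U₂ := by
    rw [hU₂span, hhu1]
    apply act_mem_span
    intro j hj
    have hj' : ¬ (j : ℕ) < p := hj
    rw [act_diagonal, hz1app, if_neg hj', mul_zero]
  set w := act (mat g) (act (mat h) u1) with hw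
  have hwmem : w ∈ mapMat (mat g) U₂ := Submodule.mem_map_of_mem hw'mem
  have hvw : v - w = act (mat g) (act (mat h) u2) := by
    have hsplit : act (mat h) u = act (mat h) u1 + act (mat h) u2 := by
      rw [← act_add, hu12]
    have hv2 : v = act (mat g) (act (mat h) u) := by rw [← act_mul, ← hBgh, hBu]
    rw [hv2, hsplit, act_add, hw]
    exact add_sub_cancel_left _ _
  have habs : ∀ j, |z2 j| ≤ |y j| := by
    intro j
    rw [hz2app]
    by_cases hj : (j : ℕ) < p <;> simp [hj]
  have hnu2 : ‖act (mat h) u2‖ ≤ σ' cp * ‖u‖ := by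
    rw [hhu2, norm_act_unitary hk']
    have hupper := diag_upper σ' z2 cp hpos' (by
      intro j hzj
      have hjp : ¬ (j : ℕ) < p := by
        intro hc
        exact hzj (by rw [hz2app, if_pos hc])
      exact hmono' cp j (by rw [Fin.le_def, hcp]; simp; omega))
    calc ‖act (Matrix.diagonal σ') z2‖ ≤ σ' cp * ‖z2‖ := hupper
      _ ≤ σ' cp * ‖y‖ := mul_le_mul_of_nonneg_left (norm_le_of_abs_le habs) (hpos' cp)
      _ = σ' cp * ‖u‖ := by rw [hy, norm_act_unitary hl']
  have hnvw : ‖v - w‖ ≤ A * (σ' cp * ‖u‖) := by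
    rw [hvw]
    calc ‖act (mat g) (act (mat h) u2)‖ ≤ A * ‖act (mat h) u2‖ := norm_act_le _ _
      _ ≤ A * (σ' cp * ‖u‖) := mul_le_mul_of_nonneg_left hnu2 hA0
  have hbddS : BddBelow {s | ∃ w' ∈ mapMat (mat g) U₂, w' ≠ 0 ∧ s = sinAngle v w'} :=
    ⟨0, by rintro s ⟨w', _, _, rfl⟩; exact sinAngle_nonneg _ _⟩
  by_cases hw0 : w = 0
  · -- degenerate case : the right-hand side is at least 1
    have hu1z : act (mat h) u1 = 0 := by
      by_contra hne
      exact act_GL_ne_zero (a := g) hne (hw ▸ hw0)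
    have hu1zero : u1 = 0 := by
      by_contra hne
      exact act_GL_ne_zero (a := h) hne hu1z
    have hvle : ‖v‖ ≤ A * (σ' cp * ‖u‖) := by
      have hvv : v - w = v := by rw [hw0, sub_zero]
      rw [← hvv]; exact hnvw
    have hkey : σ c1 ≤ A * σ' cp := by
      have hchain := le_trans hlowv hvle
      have hchain' : σ c1 * ‖u‖ ≤ (A * σ' cp) * ‖u‖ := by
        rw [mul_assoc]; exact hchain
      exact le_of_mul_le_mul_right hchain' hunorm
    have hq_le : q ≤ A * N * r := by
      calc q ≤ N * σ c1 := hF2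
        _ ≤ N * (A * σ' cp) := mul_le_mul_of_nonneg_left hkey hN_pos.le
        _ ≤ N * (A * r) := mul_le_mul_of_nonneg_left
            (mul_le_mul_of_nonneg_left hF1 hA0) hN_pos.le
        _ = A * N * r := by ring
    have h1le : 1 ≤ A * N * (r / q) := by
      calc (1:ℝ) = q / q := (div_self (ne_of_gt hq_pos)).symm
        _ ≤ (A * N * r) / q := by gcongr
        _ = A * N * (r / q) := mul_div_assoc _ _ _
    obtain ⟨x0, hx0U₂, hx0n⟩ := exists_unit_vector (by rw [hU₂fin]; omega)
    have hx0ne : x0 ≠ 0 := by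
      intro hc; rw [hc, norm_zero] at hx0n; exact zero_ne_one hx0n
    have hw0mem : act (mat g) x0 ∈ mapMat (mat g) U₂ := Submodule.mem_map_of_mem hx0U₂
    have hw0ne : act (mat g) x0 ≠ 0 := act_GL_ne_zero hx0ne
    calc sInf {s | ∃ w' ∈ mapMat (mat g) U₂, w' ≠ 0 ∧ s = sinAngle v w'}
        ≤ sinAngle v (act (mat g) x0) := csInf_le hbddS ⟨_, hw0mem, hw0ne, rfl⟩
      _ ≤ 1 := sinAngle_le_one _ _
      _ ≤ A * N * (r / q) := h1le
  · -- main case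
    have hsin : sinAngle v w ≤ A * σ' cp / σ c1 := by
      have hdd : ‖v - w‖ / ‖v‖ ≤ (A * (σ' cp * ‖u‖)) / (σ c1 * ‖u‖) :=
        div_le_div₀ (mul_nonneg hA0 (mul_nonneg (hpos' cp) (norm_nonneg _)))
          hnvw (mul_pos hσc1 hunorm) hlowv
      have hcancel : (A * (σ' cp * ‖u‖)) / (σ c1 * ‖u‖) = A * σ' cp / σ c1 := by
        rw [show A * (σ' cp * ‖u‖) = (A * σ' cp) * ‖u‖ from by ring,
          mul_div_mul_right _ _ (ne_of_gt hunorm)]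
      calc sinAngle v w ≤ ‖v - w‖ / ‖v‖ := sinAngle_le_div v w hv0
        _ ≤ (A * (σ' cp * ‖u‖)) / (σ c1 * ‖u‖) := hdd
        _ = A * σ' cp / σ c1 := hcancel
    calc sInf {s | ∃ w' ∈ mapMat (mat g) U₂, w' ≠ 0 ∧ s = sinAngle v w'}
        ≤ sinAngle v w := csInf_le hbddS ⟨w, hwmem, hw0, rfl⟩
      _ ≤ A * σ' cp / σ c1 := hsin
      _ ≤ A * N * (r / q) := hM

/-- Lemma A.4 (2) of [BPS]. -/
theorem stmt1 {d : ℕ} (p : ℕ) (hp1 : 1 ≤ p) (hpd : p ≤ d - 1)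
    (g h : GL (Fin d) ℝ)
    (hg : HasGap (mat g) p) (hh : HasGap (mat h) p)
    (hgh : HasGap (mat (g * h)) p) :
    grassDist (cartanAttractor (mat (g * h)) p) (mapMat (mat g) (cartanAttractor (mat h) p)) ≤
      opNorm (mat g) * opNorm (mat (g⁻¹)) *
        (sv (mat h) (p + 1) / sv (mat h) p) := by
  have hd2 : p + 1 ≤ d := by omega
  have hRHS0 : 0 ≤ opNorm (mat g) * opNorm (mat g⁻¹) *
      (sv (mat h) (p + 1) / sv (mat h) p) :=
    mul_nonneg (mul_nonneg (opNorm_nonneg' _) (opNorm_nonneg' _))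
      (div_nonneg (sv_nonneg _ _ (by omega) (by omega))
        (sv_nonneg _ _ (by omega) (by omega)))
  by_cases hE1 : ∃ U, IsCartanAttractor (mat (g * h)) p U
  · by_cases hE2 : ∃ U, IsCartanAttractor (mat h) p U
    · have e1 : cartanAttractor (mat (g * h)) p = hE1.choose := by
        rw [cartanAttractor, dif_pos hE1]
      have e2 : cartanAttractor (mat h) p = hE2.choose := by
        rw [cartanAttractor, dif_pos hE2]
      rw [e1, e2]
      exact key hp1 hd2 g h hh _ _ hE1.choose_spec hE2.choose_spec
    · have e2 : cartanAttractor (mat h) p = ⊥ := by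
        rw [cartanAttractor, dif_neg hE2]
      rw [e2, grassDist]
      refine Real.sSup_le ?_ hRHS0
      rintro ρ ⟨v, hv, hv0, rfl⟩
      have hempty : {s | ∃ w ∈ mapMat (mat g) (⊥ : Submodule ℝ (Euc d)), w ≠ 0 ∧
          s = sinAngle v w} = ∅ := by
        rw [Set.eq_empty_iff_forall_notMem]
        rintro s ⟨w, hw, hw0, _⟩
        rw [mapMat, Submodule.map_bot] at hw
        exact hw0 ((Submodule.mem_bot ℝ).mp hw)
      rw [hempty, Real.sInf_empty]
      exact hRHS0
  · have e1 : cartanAttractor (mat (g * h)) p = ⊥ := by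
      rw [cartanAttractor, dif_neg hE1]
    rw [e1, grassDist]
    refine Real.sSup_le ?_ hRHS0
    rintro ρ ⟨v, hv, hv0, rfl⟩
    exact absurd ((Submodule.mem_bot ℝ).mp hv) hv0

end Paper
end
end

section
/- Let g ∈ GL(d,ℝ), and let P ⊆ ℝ^d be a p-dimensional subspace and Q ⊆ ℝ^d a (d−p)-dimensional subspace such that P ⊥ Q and g·P ⊥ g·Q. Then for all p-dimensional subspaces P₁, P₂ with Pᵢ ∩ Q = {0} and d(g·Pᵢ, g·P) < 1/√2 (i = 1,2), one has d(g·P₁, g·P₂) ≥ (m(g|_Q)/(4·‖g|_P‖))·d(P₁,P₂). -/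
/-!
Write `F = g·P` and `π_W` for the orthogonal projection onto `W`. Since `Q = Pᗮ` and
`g·Q = Fᗮ`, the map `g` intertwines projections: `π_F (g z) = g (π_P z)`. The infimum of
`sin ∠(v, w)` over `w ∈ W` is `‖π_{Wᗮ} v‖ / ‖v‖`, so `d(g·Pᵢ, F) < 1/√2` says that
`‖π_{Fᗮ} (g v)‖ ≤ ‖π_F (g v)‖` for `v ∈ Pᵢ`. For `v ∈ P₁` this gives `‖g v‖ ≤ 2 ‖g|_P‖ ‖v‖`.
For `w ∈ P₂`, pick `u ∈ P₂` with `v - u ∈ Q` (as `P₂ ⊕ Q` is everything); then `g (v - u) ∈ Fᗮ`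
is the sum of `π_{Fᗮ} (g v - g w)` and `π_{Fᗮ} (g (w - u))`, and the latter has norm at most
`‖π_F (g (w - u))‖ = ‖π_F (g (w - v))‖`. Hence `m(g|_Q) ‖π_{P₂ᗮ} v‖ ≤ ‖g (v - u)‖ ≤ 2 ‖g v - g w‖`,
and the two estimates combine to the factor `m(g|_Q) / (4 ‖g|_P‖)`.
-/

noncomputable section

open scoped Matrix RealInnerProductSpace
open Filter Topology

open InnerProductGeometry Module

section Projection

variable {E : Type*} [NormedAddCommGroup E] [InnerProductSpace ℝ E]

theorem Submodule.sin_angle_starProjection_mul_norm (K : Submodule ℝ E)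
    [K.HasOrthogonalProjection] (u : E) :
    Real.sin (angle u (K.starProjection u)) * ‖u‖ = ‖Kᗮ.starProjection u‖ := by
  have h : ⟪K.starProjection u, Kᗮ.starProjection u⟫ = 0 :=
    Submodule.inner_right_of_mem_orthogonal (K.starProjection_apply_mem u)
      (Kᗮ.starProjection_apply_mem u)
  have := sin_angle_add_mul_norm_of_inner_eq_zero h
  rwa [K.starProjection_add_starProjection_orthogonal, angle_comm] at this

theorem sin_angle_mul_norm_eq_norm_starProjection_orthogonal_span (u : E) {w : E}
    (hw : w ≠ 0) :
    Real.sin (angle u w) * ‖u‖ = ‖(ℝ ∙ w)ᗮ.starProjection u‖ := by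
  have hw' : 0 < ‖w‖ := norm_pos_iff.mpr hw
  have hproj : ‖(ℝ ∙ w).starProjection u‖ = |⟪u, w⟫| / ‖w‖ := by
    rw [Submodule.starProjection_singleton, norm_smul, Real.norm_eq_abs, abs_div,
      real_inner_comm, RCLike.ofReal_real_eq_id, id, abs_of_pos (by positivity : 0 < ‖w‖ ^ 2)]
    field_simp
  have hpyth := Submodule.norm_sq_eq_add_norm_sq_starProjection u (ℝ ∙ w)
  rcases eq_or_ne u 0 with rfl | hu
  · simp
  have hcos := cos_angle u w
  refine (pow_left_inj₀ (mul_nonneg (sin_angle_nonneg u w) (norm_nonneg u)) (norm_nonneg _)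
    two_ne_zero).mp ?_
  have hsin := Real.sin_sq_add_cos_sq (angle u w)
  rw [hproj, div_pow, sq_abs] at hpyth
  rw [hcos] at hsin
  field_simp at hsin hpyth
  refine mul_right_cancel₀ (pow_ne_zero 2 hw'.ne') ?_
  linear_combination hsin + hpyth

theorem Submodule.norm_starProjection_orthogonal_le_sin_angle_mul_norm {K : Submodule ℝ E}
    [K.HasOrthogonalProjection] (u : E) {w : E} (hw : w ∈ K) :
    ‖Kᗮ.starProjection u‖ ≤ Real.sin (angle u w) * ‖u‖ := by
  rcases eq_or_ne w 0 with rfl | hw0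
  · rw [angle_zero_right, Real.sin_pi_div_two, one_mul]
    exact Kᗮ.norm_starProjection_apply_le u
  have hle : Kᗮ ≤ (ℝ ∙ w)ᗮ :=
    Submodule.orthogonal_le ((Submodule.span_singleton_le_iff_mem w K).mpr hw)
  rw [sin_angle_mul_norm_eq_norm_starProjection_orthogonal_span u hw0,
    ← Submodule.starProjection_comp_starProjection_of_le hle]
  exact Kᗮ.norm_starProjection_apply_le _

theorem Submodule.norm_starProjection_orthogonal_le_norm_sub (K : Submodule ℝ E)
    [K.HasOrthogonalProjection] (v : E) {u : E} (hu : u ∈ K) :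
    ‖Kᗮ.starProjection v‖ ≤ ‖v - u‖ := by
  rw [← sub_add_cancel v u, map_add, Submodule.starProjection_orthogonal_apply_eq_zero hu,
    add_zero, add_sub_cancel_right]
  exact Kᗮ.norm_starProjection_apply_le _

end Projection

section Transfer

variable {E : Type*} [NormedAddCommGroup E] [InnerProductSpace ℝ E] [FiniteDimensional ℝ E]

theorem Submodule.eq_orthogonal_of_forall_inner_eq_zero {P Q : Submodule ℝ E}
    (h : ∀ v ∈ P, ∀ w ∈ Q, ⟪v, w⟫ = (0 : ℝ)) (hdim : finrank ℝ P + finrank ℝ Q = finrank ℝ E) :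
    Q = Pᗮ :=
  Submodule.eq_of_le_of_finrank_eq
    (fun w hw => (Submodule.mem_orthogonal P w).mpr fun v hv => h v hv w hw)
    (by have := P.finrank_add_finrank_orthogonal; omega)

variable {T : E →ₗ[ℝ] E} {P : Submodule ℝ E}

theorem map_orthogonal_eq_orthogonal_map (hTinj : Function.Injective T)
    (h : ∀ v ∈ P.map T, ∀ w ∈ Pᗮ.map T, ⟪v, w⟫ = (0 : ℝ)) :
    Pᗮ.map T = (P.map T)ᗮ := by
  refine Submodule.eq_orthogonal_of_forall_inner_eq_zero h ?_
  rw [← (Submodule.equivMapOfInjective T hTinj P).finrank_eq,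
    ← (Submodule.equivMapOfInjective T hTinj Pᗮ).finrank_eq, P.finrank_add_finrank_orthogonal]

theorem starProjection_map_apply_of_map_orthogonal (hT : Pᗮ.map T = (P.map T)ᗮ) (z : E) :
    (P.map T).starProjection (T z) = T (P.starProjection z) :=
  Submodule.eq_starProjection_of_mem_orthogonal'
    (Submodule.mem_map_of_mem (P.starProjection_apply_mem z))
    (hT ▸ Submodule.mem_map_of_mem (Pᗮ.starProjection_apply_mem z))
    (by rw [← map_add, P.starProjection_add_starProjection_orthogonal])

theorem norm_apply_le_two_mul_of_map_orthogonal (hT : Pᗮ.map T = (P.map T)ᗮ) {M : ℝ}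
    (hM0 : 0 ≤ M) (hM : ∀ z ∈ P, ‖T z‖ ≤ M * ‖z‖) {v : E}
    (hclose : ‖(P.map T)ᗮ.starProjection (T v)‖ ≤ ‖(P.map T).starProjection (T v)‖) :
    ‖T v‖ ≤ 2 * M * ‖v‖ :=
  calc ‖T v‖ = ‖(P.map T).starProjection (T v) + (P.map T)ᗮ.starProjection (T v)‖ := by
        rw [Submodule.starProjection_add_starProjection_orthogonal]
    _ ≤ 2 * ‖T (P.starProjection v)‖ := by
        rw [← starProjection_map_apply_of_map_orthogonal hT]
        linarith [norm_add_le ((P.map T).starProjection (T v)) ((P.map T)ᗮ.starProjection (T v))]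
    _ ≤ 2 * (M * ‖v‖) := by
        gcongr
        exact (hM _ (P.starProjection_apply_mem v)).trans
          (by gcongr; exact P.norm_starProjection_apply_le v)
    _ = 2 * M * ‖v‖ := by ring

theorem norm_apply_sub_le_two_mul_of_map_orthogonal (hT : Pᗮ.map T = (P.map T)ᗮ) {u v w : E}
    (hvu : v - u ∈ Pᗮ)
    (hclose : ‖(P.map T)ᗮ.starProjection (T (w - u))‖ ≤ ‖(P.map T).starProjection (T (w - u))‖) :
    ‖T (v - u)‖ ≤ 2 * ‖T v - T w‖ := by
  set F := P.map T
  have hperp : T (v - u) ∈ Fᗮ := hT ▸ Submodule.mem_map_of_mem hvu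
  have hproj : P.starProjection (w - u) = P.starProjection (w - v) := by
    rw [← sub_add_sub_cancel w v u, map_add,
      (P.starProjection_apply_eq_zero_iff).mpr hvu, add_zero]
  calc ‖T (v - u)‖ = ‖Fᗮ.starProjection (T v - T w) + Fᗮ.starProjection (T (w - u))‖ := by
        rw [← map_add, map_sub T w u, sub_add_sub_cancel, ← map_sub,
          Submodule.starProjection_eq_self_iff.mpr hperp]
    _ ≤ ‖T v - T w‖ + ‖F.starProjection (T (w - v))‖ := by
        rw [starProjection_map_apply_of_map_orthogonal hT, hproj,
          ← starProjection_map_apply_of_map_orthogonal hT] at hclose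
        exact norm_add_le_of_le (Fᗮ.norm_starProjection_apply_le _) hclose
    _ ≤ ‖T v - T w‖ + ‖T v - T w‖ := by
        gcongr
        exact (F.norm_starProjection_apply_le _).trans (by rw [map_sub, norm_sub_rev])
    _ = 2 * ‖T v - T w‖ := by ring

theorem mul_norm_starProjection_orthogonal_le_of_map_orthogonal (hT : Pᗮ.map T = (P.map T)ᗮ)
    {P₂ : Submodule ℝ E} (hcompl : P₂ ⊔ Pᗮ = ⊤) {m : ℝ} (hm0 : 0 ≤ m)
    (hm : ∀ z ∈ Pᗮ, m * ‖z‖ ≤ ‖T z‖)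
    (hclose : ∀ w ∈ P₂,
      ‖(P.map T)ᗮ.starProjection (T w)‖ ≤ ‖(P.map T).starProjection (T w)‖)
    (v : E) {w : E} (hw : w ∈ P₂) :
    m * ‖P₂ᗮ.starProjection v‖ ≤ 2 * ‖T v - T w‖ := by
  obtain ⟨u, hu, q, hq, rfl⟩ := Submodule.mem_sup.mp (hcompl ▸ Submodule.mem_top : v ∈ P₂ ⊔ Pᗮ)
  have hvu : u + q - u ∈ Pᗮ := by rwa [add_sub_cancel_left]
  calc m * ‖P₂ᗮ.starProjection (u + q)‖ ≤ m * ‖u + q - u‖ := by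
        gcongr; exact P₂.norm_starProjection_orthogonal_le_norm_sub _ hu
    _ ≤ ‖T (u + q - u)‖ := hm _ hvu
    _ ≤ 2 * ‖T (u + q) - T w‖ :=
        norm_apply_sub_le_two_mul_of_map_orthogonal hT hvu (hclose _ (P₂.sub_mem hw hu))

end Transfer

namespace Paper

section Grassmannian

variable {d : ℕ}

def minSinAngle (u : Euc d) (W : Submodule ℝ (Euc d)) : ℝ :=
  sInf { s | ∃ w ∈ W, w ≠ 0 ∧ s = sinAngle u w }

theorem minSinAngle_le_sinAngle (u : Euc d) {W : Submodule ℝ (Euc d)} {w : Euc d} (hw : w ∈ W)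
    (hw0 : w ≠ 0) : minSinAngle u W ≤ sinAngle u w :=
  csInf_le ⟨0, by rintro _ ⟨w, -, -, rfl⟩; exact sin_angle_nonneg u w⟩ ⟨w, hw, hw0, rfl⟩

theorem minSinAngle_nonneg (u : Euc d) (W : Submodule ℝ (Euc d)) : 0 ≤ minSinAngle u W :=
  Real.sInf_nonneg (by rintro _ ⟨w, -, -, rfl⟩; exact sin_angle_nonneg u w)

theorem minSinAngle_le_one (u : Euc d) (W : Submodule ℝ (Euc d)) : minSinAngle u W ≤ 1 := by
  rcases Set.eq_empty_or_nonempty { s | ∃ w ∈ W, w ≠ 0 ∧ s = sinAngle u w } with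
    h | ⟨_, w, hw, hw0, rfl⟩
  · rw [minSinAngle, h, Real.sInf_empty]
    exact zero_le_one
  · exact (minSinAngle_le_sinAngle u hw hw0).trans (Real.sin_le_one _)

theorem grassDist_nonneg (S W : Submodule ℝ (Euc d)) : 0 ≤ grassDist S W :=
  Real.sSup_nonneg (by rintro _ ⟨v, -, -, rfl⟩; exact minSinAngle_nonneg v W)

theorem minSinAngle_le_div_norm {u : Euc d} (hu : u ≠ 0) (W : Submodule ℝ (Euc d)) :
    minSinAngle u W ≤ ‖Wᗮ.starProjection u‖ / ‖u‖ := by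
  rw [le_div_iff₀ (norm_pos_iff.mpr hu)]
  by_cases hp : W.starProjection u = 0
  · rw [Submodule.starProjection_orthogonal_val, hp, sub_zero]
    exact mul_le_of_le_one_left (norm_nonneg u) (minSinAngle_le_one u W)
  · rw [← W.sin_angle_starProjection_mul_norm u]
    exact mul_le_mul_of_nonneg_right
      (minSinAngle_le_sinAngle u (W.starProjection_apply_mem u) hp) (norm_nonneg u)

theorem div_norm_le_minSinAngle {u : Euc d} (hu : u ≠ 0) {W : Submodule ℝ (Euc d)} (hW : W ≠ ⊥) :
    ‖Wᗮ.starProjection u‖ / ‖u‖ ≤ minSinAngle u W := by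
  obtain ⟨w, hw, hw0⟩ := (Submodule.ne_bot_iff W).mp hW
  refine le_csInf ⟨_, w, hw, hw0, rfl⟩ ?_
  rintro _ ⟨w, hw, -, rfl⟩
  rw [div_le_iff₀ (norm_pos_iff.mpr hu)]
  exact Submodule.norm_starProjection_orthogonal_le_sin_angle_mul_norm u hw

theorem grassDist_le_of_forall {S W : Submodule ℝ (Euc d)} {c : ℝ} (hc : 0 ≤ c)
    (h : ∀ v ∈ S, ‖Wᗮ.starProjection v‖ ≤ c * ‖v‖) : grassDist S W ≤ c := by
  refine Real.sSup_le ?_ hc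
  rintro _ ⟨v, hv, hv0, rfl⟩
  exact (minSinAngle_le_div_norm hv0 W).trans ((div_le_iff₀ (norm_pos_iff.mpr hv0)).mpr (h v hv))

theorem norm_starProjection_orthogonal_le_grassDist_mul_norm {S W : Submodule ℝ (Euc d)}
    (hW : W ≠ ⊥) {v : Euc d} (hv : v ∈ S) :
    ‖Wᗮ.starProjection v‖ ≤ grassDist S W * ‖v‖ := by
  rcases eq_or_ne v 0 with rfl | hv0
  · simp
  rw [← div_le_iff₀ (norm_pos_iff.mpr hv0)]
  refine (div_norm_le_minSinAngle hv0 hW).trans (le_csSup ⟨1, ?_⟩ ⟨v, hv, hv0, rfl⟩)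
  rintro _ ⟨v, -, -, rfl⟩
  exact minSinAngle_le_one v W

theorem norm_starProjection_orthogonal_le_norm_starProjection {S W : Submodule ℝ (Euc d)}
    (hW : W ≠ ⊥) (hSW : grassDist S W < 1 / √2) {v : Euc d} (hv : v ∈ S) :
    ‖Wᗮ.starProjection v‖ ≤ ‖W.starProjection v‖ := by
  have hsq : grassDist S W ^ 2 ≤ 1 / 2 := by
    have := pow_lt_pow_left₀ hSW (grassDist_nonneg S W) two_ne_zero
    rw [div_pow, one_pow, Real.sq_sqrt zero_le_two] at this
    exact this.le
  have hpyth := Submodule.norm_sq_eq_add_norm_sq_starProjection v W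
  have hle := pow_le_pow_left₀ (norm_nonneg _)
    (norm_starProjection_orthogonal_le_grassDist_mul_norm hW hv) 2
  refine (pow_le_pow_iff_left₀ (norm_nonneg _) (norm_nonneg _) two_ne_zero).mp ?_
  nlinarith [sq_nonneg ‖v‖]

theorem mul_grassDist_le_grassDist_map {T : Euc d →ₗ[ℝ] Euc d} {P₁ P₂ : Submodule ℝ (Euc d)}
    (hP₂ : P₂.map T ≠ ⊥) {m M : ℝ} (hm : 0 < m) (hM : 0 < M)
    (hexp : ∀ v ∈ P₁, ∀ w ∈ P₂, m * ‖P₂ᗮ.starProjection v‖ ≤ 2 * ‖T v - T w‖)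
    (hgrow : ∀ v ∈ P₁, ‖T v‖ ≤ 2 * M * ‖v‖) :
    m / (4 * M) * grassDist P₁ P₂ ≤ grassDist (P₁.map T) (P₂.map T) := by
  set D := grassDist (P₁.map T) (P₂.map T)
  have hD : 0 ≤ D := grassDist_nonneg _ _
  rw [← le_div_iff₀' (by positivity), div_div_eq_mul_div]
  refine grassDist_le_of_forall (by positivity) fun v hv => ?_
  obtain ⟨w, hw, hTw⟩ := (P₂.map T).starProjection_apply_mem (T v)
  have hbound : m * ‖P₂ᗮ.starProjection v‖ ≤ 4 * M * D * ‖v‖ :=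
    calc m * ‖P₂ᗮ.starProjection v‖ ≤ 2 * ‖T v - T w‖ := hexp v hv w hw
      _ = 2 * ‖(P₂.map T)ᗮ.starProjection (T v)‖ := by
          rw [hTw, Submodule.starProjection_orthogonal_val]
      _ ≤ 2 * (D * (2 * M * ‖v‖)) := by
          gcongr
          exact (norm_starProjection_orthogonal_le_grassDist_mul_norm hP₂
            (Submodule.mem_map_of_mem hv)).trans (by gcongr; exact hgrow v hv)
      _ = 4 * M * D * ‖v‖ := by ring
  rw [div_mul_eq_mul_div, le_div_iff₀ hm]
  linarith

end Grassmannian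

section Restriction

variable {d : ℕ}

theorem norm_act_div_norm_mem {g : Matrix (Fin d) (Fin d) ℝ} {W : Submodule ℝ (Euc d)} {z : Euc d}
    (hz : z ∈ W) (hz0 : z ≠ 0) :
    ‖act g z‖ / ‖z‖ ∈ { t | ∃ v ∈ W, ‖v‖ = 1 ∧ t = ‖act g v‖ } := by
  refine ⟨(‖z‖⁻¹ : ℝ) • z, W.smul_mem _ hz, norm_smul_inv_norm hz0, ?_⟩
  unfold act
  rw [map_smul, norm_smul, norm_inv, norm_norm, inv_mul_eq_div]

theorem minRestrict_mul_norm_le (g : Matrix (Fin d) (Fin d) ℝ) {W : Submodule ℝ (Euc d)}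
    {z : Euc d} (hz : z ∈ W) : minRestrict g W * ‖z‖ ≤ ‖act g z‖ := by
  rcases eq_or_ne z 0 with rfl | hz0
  · simp
  rw [← le_div_iff₀ (norm_pos_iff.mpr hz0)]
  exact csInf_le ⟨0, by rintro _ ⟨v, -, -, rfl⟩; positivity⟩ (norm_act_div_norm_mem hz hz0)

theorem norm_act_le_normRestrict_mul (g : Matrix (Fin d) (Fin d) ℝ) {W : Submodule ℝ (Euc d)}
    {z : Euc d} (hz : z ∈ W) : ‖act g z‖ ≤ normRestrict g W * ‖z‖ := by
  rcases eq_or_ne z 0 with rfl | hz0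
  · simp [act]
  rw [← div_le_iff₀ (norm_pos_iff.mpr hz0)]
  refine le_csSup ⟨opNorm g, ?_⟩ (norm_act_div_norm_mem hz hz0)
  rintro _ ⟨v, -, hv, rfl⟩
  have := (Matrix.toEuclideanCLM (𝕜 := ℝ) g).le_opNorm v
  rwa [hv, mul_one] at this

theorem normRestrict_nonneg (g : Matrix (Fin d) (Fin d) ℝ) (W : Submodule ℝ (Euc d)) :
    0 ≤ normRestrict g W :=
  Real.sSup_nonneg (by rintro _ ⟨v, -, -, rfl⟩; positivity)

theorem ne_bot_of_normRestrict_pos {g : Matrix (Fin d) (Fin d) ℝ} {W : Submodule ℝ (Euc d)}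
    (h : 0 < normRestrict g W) : W ≠ ⊥ := by
  rintro rfl
  simp [normRestrict] at h

theorem injective_toEuclideanCLM_mat (g : GL (Fin d) ℝ) :
    Function.Injective (Matrix.toEuclideanCLM (𝕜 := ℝ) (mat g)) :=
  (ContinuousLinearMap.isUnit_iff_bijective.mp (g.isUnit.map Matrix.toEuclideanCLM)).1

end Restriction

theorem stmt5_general {d : ℕ} (p : ℕ) (g : GL (Fin d) ℝ)
    (P Q : Submodule ℝ (Euc d))
    (hP : Module.finrank ℝ P = p) (hQ : Module.finrank ℝ Q = d - p)
    (hPQ : ∀ v ∈ P, ∀ w ∈ Q, ⟪v, w⟫ = (0 : ℝ))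
    (hgPQ : ∀ v ∈ mapMat (mat g) P, ∀ w ∈ mapMat (mat g) Q, ⟪v, w⟫ = (0 : ℝ))
    (P₁ P₂ : Submodule ℝ (Euc d))
    (h2 : Module.finrank ℝ P₂ = p)
    (h2Q : P₂ ⊓ Q = ⊥)
    (hc1 : grassDist (mapMat (mat g) P₁) (mapMat (mat g) P) < 1 / Real.sqrt 2)
    (hc2 : grassDist (mapMat (mat g) P₂) (mapMat (mat g) P) < 1 / Real.sqrt 2) :
    (minRestrict (mat g) Q / (4 * normRestrict (mat g) P)) * grassDist P₁ P₂ ≤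
      grassDist (mapMat (mat g) P₁) (mapMat (mat g) P₂) := by
  set T : Euc d →ₗ[ℝ] Euc d := (Matrix.toEuclideanCLM (𝕜 := ℝ) (mat g)).toLinearMap
  have hTinj : Function.Injective T := injective_toEuclideanCLM_mat g
  rcases le_or_gt (minRestrict (mat g) Q / (4 * normRestrict (mat g) P)) 0 with hc | hc
  · exact (mul_nonpos_of_nonpos_of_nonneg hc (grassDist_nonneg _ _)).trans (grassDist_nonneg _ _)
  obtain ⟨hm, hM⟩ : 0 < minRestrict (mat g) Q ∧ 0 < normRestrict (mat g) P := by
    rcases div_pos_iff.mp hc with h | h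
    · exact ⟨h.1, by linarith [h.2]⟩
    · linarith [h.2, normRestrict_nonneg (mat g) P]
  have hPbot : P ≠ ⊥ := ne_bot_of_normRestrict_pos hM
  have hpd : p ≤ d := by simpa [hP] using P.finrank_le
  obtain rfl : Q = Pᗮ := Submodule.eq_orthogonal_of_forall_inner_eq_zero hPQ
    (by rw [hP, hQ, finrank_euclideanSpace_fin]; omega)
  have hT : Pᗮ.map T = (P.map T)ᗮ := map_orthogonal_eq_orthogonal_map hTinj hgPQ
  have hP₂bot : P₂ ≠ ⊥ := by
    rwa [Ne, ← Submodule.finrank_eq_zero, h2, ← hP, Submodule.finrank_eq_zero]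
  have hF : P.map T ≠ ⊥ := by simpa using (Submodule.map_injective_of_injective hTinj).ne hPbot
  have hP₂ : P₂.map T ≠ ⊥ := by
    simpa using (Submodule.map_injective_of_injective hTinj).ne hP₂bot
  have hcompl : P₂ ⊔ Pᗮ = ⊤ := Submodule.eq_top_of_disjoint _ _
    (by rw [h2, ← hP, P.finrank_add_finrank_orthogonal]) (disjoint_iff.mpr h2Q)
  have hclose : ∀ S : Submodule ℝ (Euc d), grassDist (S.map T) (P.map T) < 1 / √2 → ∀ s ∈ S,
      ‖(P.map T)ᗮ.starProjection (T s)‖ ≤ ‖(P.map T).starProjection (T s)‖ :=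
    fun S hS s hs => norm_starProjection_orthogonal_le_norm_starProjection hF hS
      (Submodule.mem_map_of_mem hs)
  exact mul_grassDist_le_grassDist_map hP₂ hm (by positivity)
    (fun v _ w hw => mul_norm_starProjection_orthogonal_le_of_map_orthogonal hT hcompl hm.le
      (fun z hz => minRestrict_mul_norm_le _ hz) (hclose P₂ hc2) v hw)
    (fun v hv => norm_apply_le_two_mul_of_map_orthogonal hT hM.le
      (fun z hz => norm_act_le_normRestrict_mul _ hz) (hclose P₁ hc1 v hv))

/-- Lemma 2.8 (Lemma `l.expand`) of the paper. -/
theorem stmt5 {d : ℕ} (p : ℕ) (g : GL (Fin d) ℝ)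
    (P Q : Submodule ℝ (Euc d))
    (hP : Module.finrank ℝ P = p) (hQ : Module.finrank ℝ Q = d - p)
    (hPQ : ∀ v ∈ P, ∀ w ∈ Q, ⟪v, w⟫ = (0 : ℝ))
    (hgPQ : ∀ v ∈ mapMat (mat g) P, ∀ w ∈ mapMat (mat g) Q, ⟪v, w⟫ = (0 : ℝ))
    (P₁ P₂ : Submodule ℝ (Euc d))
    (h1 : Module.finrank ℝ P₁ = p) (h2 : Module.finrank ℝ P₂ = p)
    (h1Q : P₁ ⊓ Q = ⊥) (h2Q : P₂ ⊓ Q = ⊥)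
    (hc1 : grassDist (mapMat (mat g) P₁) (mapMat (mat g) P) < 1 / Real.sqrt 2)
    (hc2 : grassDist (mapMat (mat g) P₂) (mapMat (mat g) P) < 1 / Real.sqrt 2) :
    (minRestrict (mat g) Q / (4 * normRestrict (mat g) P)) * grassDist P₁ P₂ ≤
      grassDist (mapMat (mat g) P₁) (mapMat (mat g) P₂) :=
  stmt5_general p g P Q hP hQ hPQ hgPQ P₁ P₂ h2 h2Q hc1 hc2

end Paper
end
end
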